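/- arXiv:2005.11675 — 3 statements merged into one kernel-verified Lean document; each statement's English description precedes it below -/
import Mathlib

section
/- Suppose μ_k ≤ c₁Np·r₁^k and θ_k² ≤ c₂Np·r₂^k + θ_c² for all 0 ≤ k ≤ Np−1, with 0 < r₁, r₂ < 1, c₁, c₂, θ_c² > 0, and set α = Np/(Np+b) for b > 0. Then the control energy E = (1−α)²Σ_k θ_k² μ_k/(α+(1−α)μ_k)² satisfies E ≤ b²c₁·( c₂/(1−r₁r₂) + (θ_c²/(Np))·(1/(1−r₁)) ), a bound independent of N up to the vanishing second term; in particular E remains bounded as N → ∞. -/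
/-!
With `α = M / (M + b)` one has `(1 - α) / α = b / M`, and the denominator `α + (1 - α) μ_k`
is at least `α` since `μ_k ≥ 0`. Hence each summand of the energy is at most
`(b / M)² θ_k² μ_k ≤ b² c₁ (c₂ (r₁ r₂)^k + (θ_c² / M) r₁^k)`, and summing the two geometric
series gives the bound.
-/

open Finset

lemma sum_fin_pow_le_one_div_one_sub {x : ℝ} (n : ℕ) (hx₀ : 0 ≤ x) (hx₁ : x < 1) :
    ∑ k : Fin n, x ^ (k : ℕ) ≤ 1 / (1 - x) := by
  rw [Fin.sum_univ_eq_sum_range (fun k => x ^ k), range_eq_Ico, ← pow_zero x]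
  exact geom_sum_Ico_le_of_lt_one hx₀ hx₁

lemma one_sub_div_self_div_self (M b : ℝ) (hM : M ≠ 0) (hMb : M + b ≠ 0) :
    (1 - M / (M + b)) / (M / (M + b)) = b / M := by
  field_simp
  ring

lemma sq_one_sub_mul_div_sq_le {α μ t : ℝ} (hα₀ : 0 < α) (hα₁ : α ≤ 1) (hμ : 0 ≤ μ)
    (ht : 0 ≤ t) :
    (1 - α) ^ 2 * (t * μ / (α + (1 - α) * μ) ^ 2) ≤ ((1 - α) / α) ^ 2 * (t * μ) := by
  have hden : α ≤ α + (1 - α) * μ := le_add_of_nonneg_right (by nlinarith)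
  calc (1 - α) ^ 2 * (t * μ / (α + (1 - α) * μ) ^ 2)
      ≤ (1 - α) ^ 2 * (t * μ / α ^ 2) := by gcongr
    _ = ((1 - α) / α) ^ 2 * (t * μ) := by ring

lemma energy_term_le {M b c₁ c₂ θc2 r₁ r₂ μ θ α : ℝ} (k : ℕ) (hM : 0 < M) (hb : 0 < b)
    (hμ0 : 0 ≤ μ) (hμ : μ ≤ c₁ * M * r₁ ^ k) (hθ : θ ^ 2 ≤ c₂ * M * r₂ ^ k + θc2)
    (hα : α = M / (M + b)) :
    (1 - α) ^ 2 * (θ ^ 2 * μ / (α + (1 - α) * μ) ^ 2) ≤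
      b ^ 2 * c₁ * (c₂ * (r₁ * r₂) ^ k + θc2 / M * r₁ ^ k) := by
  have hα₀ : 0 < α := by rw [hα]; positivity
  have hα₁ : α ≤ 1 := by rw [hα, div_le_one (by positivity)]; linarith
  calc (1 - α) ^ 2 * (θ ^ 2 * μ / (α + (1 - α) * μ) ^ 2)
      ≤ ((1 - α) / α) ^ 2 * (θ ^ 2 * μ) := sq_one_sub_mul_div_sq_le hα₀ hα₁ hμ0 (sq_nonneg θ)
    _ = (b / M) ^ 2 * (θ ^ 2 * μ) := by
      rw [hα, one_sub_div_self_div_self _ _ hM.ne' (by positivity)]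
    _ ≤ (b / M) ^ 2 * ((c₂ * M * r₂ ^ k + θc2) * (c₁ * M * r₁ ^ k)) := by
      gcongr (b / M) ^ 2 * ?_
      exact mul_le_mul hθ hμ hμ0 ((sq_nonneg θ).trans hθ)
    _ = b ^ 2 * c₁ * (c₂ * (r₁ * r₂) ^ k + θc2 / M * r₁ ^ k) := by
      field_simp
      ring

theorem stmt9_general (M : ℕ) (b c₁ c₂ θc2 r₁ r₂ : ℝ)
    (hb : 0 < b) (hc₁ : 0 < c₁) (hc₂ : 0 < c₂) (hθc : 0 < θc2)
    (hr₁ : r₁ ∈ Set.Ioo (0:ℝ) 1) (hr₂ : r₂ ∈ Set.Ioo (0:ℝ) 1)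
    (μ θ : Fin M → ℝ) (hμ0 : ∀ k, 0 ≤ μ k)
    (hμ : ∀ k : Fin M, μ k ≤ c₁ * M * r₁ ^ (k : ℕ))
    (hθ : ∀ k : Fin M, (θ k) ^ 2 ≤ c₂ * M * r₂ ^ (k : ℕ) + θc2)
    (α : ℝ) (hα : α = M / (M + b)) :
    (1 - α) ^ 2 * ∑ k, (θ k) ^ 2 * μ k / (α + (1 - α) * μ k) ^ 2 ≤
      b ^ 2 * c₁ * (c₂ / (1 - r₁ * r₂) + (θc2 / M) * (1 / (1 - r₁))) := by
  obtain ⟨hr₁0, hr₁1⟩ := hr₁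
  obtain ⟨hr₂0, hr₂1⟩ := hr₂
  have hr₁r₂ : r₁ * r₂ < 1 := by nlinarith
  calc (1 - α) ^ 2 * ∑ k, (θ k) ^ 2 * μ k / (α + (1 - α) * μ k) ^ 2
    _ ≤ ∑ k : Fin M, b ^ 2 * c₁ * (c₂ * (r₁ * r₂) ^ (k : ℕ) + θc2 / M * r₁ ^ (k : ℕ)) := by
      rw [mul_sum]
      exact sum_le_sum fun k _ =>
        energy_term_le k (by exact_mod_cast k.pos) hb (hμ0 k) (hμ k) (hθ k) hα
    _ = b ^ 2 * c₁ *
          (c₂ * ∑ k : Fin M, (r₁ * r₂) ^ (k : ℕ) + θc2 / M * ∑ k : Fin M, r₁ ^ (k : ℕ)) := by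
      rw [← mul_sum, sum_add_distrib, ← mul_sum, ← mul_sum]
    _ ≤ b ^ 2 * c₁ * (c₂ / (1 - r₁ * r₂) + (θc2 / M) * (1 / (1 - r₁))) := by
      rw [← mul_one_div c₂]
      gcongr
      · exact sum_fin_pow_le_one_div_one_sub M (by positivity) hr₁r₂
      · exact sum_fin_pow_le_one_div_one_sub M hr₁0.le hr₁1

theorem stmt9 (M : ℕ) (hM : 0 < M) (b c₁ c₂ θc2 r₁ r₂ : ℝ)
    (hb : 0 < b) (hc₁ : 0 < c₁) (hc₂ : 0 < c₂) (hθc : 0 < θc2)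
    (hr₁ : r₁ ∈ Set.Ioo (0:ℝ) 1) (hr₂ : r₂ ∈ Set.Ioo (0:ℝ) 1)
    (μ θ : Fin M → ℝ) (hμ0 : ∀ k, 0 ≤ μ k)
    (hμ : ∀ k : Fin M, μ k ≤ c₁ * M * r₁ ^ (k : ℕ))
    (hθ : ∀ k : Fin M, (θ k) ^ 2 ≤ c₂ * M * r₂ ^ (k : ℕ) + θc2)
    (α : ℝ) (hα : α = M / (M + b)) :
    (1 - α) ^ 2 * ∑ k, (θ k) ^ 2 * μ k / (α + (1 - α) * μ k) ^ 2 ≤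
      b ^ 2 * c₁ * (c₂ / (1 - r₁ * r₂) + (θc2 / M) * (1 / (1 - r₁))) :=
  stmt9_general M b c₁ c₂ θc2 r₁ r₂ hb hc₁ hc₂ hθc hr₁ hr₂ μ θ hμ0 hμ hθ α hα
end

section
/- If all N matrices A_j are equal to a common matrix A, then the composite output controllability Gramian W̄(t) equals the Kronecker product J_N ⊗ (C W(t) Cᵀ), where J_N is the N×N all-ones matrix and W(t) = ∫₀ᵗ e^{As}BBᵀe^{Aᵀs}ds is the ordinary output controllability Gramian; consequently rank W̄(t) = rank(C W(t) Cᵀ) ≤ p, and the nonzero eigenvalues of W̄(t) are N times those of C W(t) Cᵀ. -/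
/-!
With identical realizations every block of the composite Gramian is the same matrix
`M = C W Cᵀ`, so the composite Gramian is `M` with rows and columns reindexed along
`Prod.snd : Fin N × Fin p → Fin p`. Such a reindexing keeps the rank, since `M` is also a
submatrix of it. It also factors as `E (M Eᵀ)`, where `E` stacks `N` identity blocks and
`Eᵀ E = N • 1`. Since `XY` and `YX` have the same nonzero eigenvalues, the nonzero
eigenvalues of the composite Gramian are those of `N • M`.
-/

open Matrix MeasureTheory Kronecker

attribute [local instance] Matrix.normedAddCommGroup Matrix.normedSpace

noncomputable def COCG {N n m p : ℕ}
    (A : Fin N → Matrix (Fin n) (Fin n) ℝ)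
    (B : Matrix (Fin n) (Fin m) ℝ) (C : Matrix (Fin p) (Fin n) ℝ) (t : ℝ) :
    Matrix (Fin N × Fin p) (Fin N × Fin p) ℝ :=
  Matrix.of fun ja kb =>
    (C * (∫ s in (0:ℝ)..t,
        NormedSpace.exp (s • A ja.1) * (B * B.transpose) *
          NormedSpace.exp (s • (A kb.1).transpose)) * C.transpose) ja.2 kb.2

open Module.End

namespace Matrix

variable {ι m n R K : Type*}

theorem ones_kronecker_eq_submatrix [MulOneClass R] (M : Matrix m n R) :
    (of fun _ _ => (1 : R) : Matrix ι ι R) ⊗ₖ M = M.submatrix Prod.snd Prod.snd := by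
  ext ⟨i, a⟩ ⟨j, b⟩
  simp

theorem rank_submatrix_snd_snd [Fintype ι] [Nonempty ι] [Fintype n] [CommRing R]
    [StrongRankCondition R] (M : Matrix m n R) :
    (M.submatrix (Prod.snd : ι × m → m) (Prod.snd : ι × n → n)).rank = M.rank := by
  refine le_antisymm (rank_submatrix_le _ _ _) ?_
  obtain ⟨i⟩ := ‹Nonempty ι›
  simpa [submatrix_submatrix] using
    rank_submatrix_le (M.submatrix (Prod.snd : ι × m → m) (Prod.snd : ι × n → n))
      (Prod.mk i) (Prod.mk i)

variable [Fintype ι] [DecidableEq ι] [Fintype m] [DecidableEq m] [Fintype n] [DecidableEq n]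
  [Field K]

theorem mem_spectrum_mul_comm_of_ne_zero (A : Matrix m n K) (B : Matrix n m K) {μ : K}
    (hμ : μ ≠ 0) : μ ∈ spectrum K (A * B) ↔ μ ∈ spectrum K (B * A) := by
  have h := congrArg (Polynomial.eval μ) (charpoly_mul_comm' A B)
  simp only [Polynomial.eval_mul, Polynomial.eval_pow, Polynomial.eval_X] at h
  simp only [mem_spectrum_iff_isRoot_charpoly, Polynomial.IsRoot.def]
  constructor <;> intro h' <;> simp_all

theorem hasEigenvalue_toLin'_submatrix_snd_snd_iff (M : Matrix m m K) {μ : K} (hμ : μ ≠ 0)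
    (hι : (Fintype.card ι : K) ≠ 0) :
    HasEigenvalue (toLin' (M.submatrix (Prod.snd : ι × m → m) Prod.snd)) μ ↔
      HasEigenvalue (toLin' M) (μ / Fintype.card ι) := by
  set E : Matrix (ι × m) m K := (1 : Matrix m m K).submatrix Prod.snd id
  have hfactor : M.submatrix Prod.snd Prod.snd = E * (M * Eᵀ) := by
    ext; simp [E, mul_apply, one_apply]
  have hEE : Eᵀ * E = (Fintype.card ι : K) • 1 := by
    ext a b; by_cases hab : a = b <;> simp [E, mul_apply, one_apply, Fintype.sum_prod_type, hab]
  simp only [hasEigenvalue_iff_mem_spectrum, spectrum_toLin']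
  rw [hfactor, mem_spectrum_mul_comm_of_ne_zero _ _ hμ, Matrix.mul_assoc, hEE, Matrix.mul_smul,
    Matrix.mul_one, ← spectrum.smul_mem_smul_iff (r := Units.mk0 _ hι) (s := μ / _)]
  simp only [Units.smul_def, Units.val_mk0, smul_eq_mul, mul_div_cancel₀ _ hι]

end Matrix

theorem COCG_const_eq_ones_kronecker {N n m p : ℕ} (A0 : Matrix (Fin n) (Fin n) ℝ)
    (B : Matrix (Fin n) (Fin m) ℝ) (C : Matrix (Fin p) (Fin n) ℝ) (t : ℝ) :
    COCG (fun _ : Fin N => A0) B C t =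
      (of fun _ _ => (1 : ℝ) : Matrix (Fin N) (Fin N) ℝ) ⊗ₖ
        (C * (∫ s in (0:ℝ)..t, NormedSpace.exp (s • A0) * (B * B.transpose) *
          NormedSpace.exp (s • A0.transpose)) * C.transpose) := by
  ext ⟨j, a⟩ ⟨k, b⟩
  simp [COCG]

theorem stmt14_general {N n m p : ℕ} (hN : 0 < N)
    (A0 : Matrix (Fin n) (Fin n) ℝ)
    (A : Fin N → Matrix (Fin n) (Fin n) ℝ) (hA : ∀ j, A j = A0)
    (B : Matrix (Fin n) (Fin m) ℝ) (C : Matrix (Fin p) (Fin n) ℝ)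
    (t : ℝ)
    (W : Matrix (Fin n) (Fin n) ℝ)
    (hWdef : W = ∫ s in (0:ℝ)..t,
        NormedSpace.exp (s • A0) * (B * B.transpose) *
          NormedSpace.exp (s • A0.transpose)) :
    COCG A B C t = (Matrix.of fun _ _ => (1:ℝ) : Matrix (Fin N) (Fin N) ℝ) ⊗ₖ
        (C * W * C.transpose) ∧
    (COCG A B C t).rank = (C * W * C.transpose).rank ∧
    (COCG A B C t).rank ≤ p ∧
    ∀ μ : ℝ, μ ≠ 0 →
      (Module.End.HasEigenvalue (Matrix.toLin' (COCG A B C t)) μ ↔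
        Module.End.HasEigenvalue (Matrix.toLin' (C * W * C.transpose)) (μ / N)) := by
  have hG : COCG A B C t = (C * W * C.transpose).submatrix Prod.snd Prod.snd := by
    rw [funext hA, COCG_const_eq_ones_kronecker, ← hWdef, ones_kronecker_eq_submatrix]
  have : Nonempty (Fin N) := ⟨⟨0, hN⟩⟩
  have hrank : (COCG A B C t).rank = (C * W * C.transpose).rank := by
    rw [hG, rank_submatrix_snd_snd]
  refine ⟨hG.trans (ones_kronecker_eq_submatrix _).symm, hrank, hrank ▸ rank_le_width _,
    fun μ hμ => ?_⟩
  rw [hG, hasEigenvalue_toLin'_submatrix_snd_snd_iff _ hμ (by simp [hN.ne']), Fintype.card_fin]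

theorem stmt14 {N n m p : ℕ} (hN : 0 < N)
    (A0 : Matrix (Fin n) (Fin n) ℝ)
    (A : Fin N → Matrix (Fin n) (Fin n) ℝ) (hA : ∀ j, A j = A0)
    (B : Matrix (Fin n) (Fin m) ℝ) (C : Matrix (Fin p) (Fin n) ℝ)
    (t : ℝ) (ht : 0 ≤ t)
    (W : Matrix (Fin n) (Fin n) ℝ)
    (hWdef : W = ∫ s in (0:ℝ)..t,
        NormedSpace.exp (s • A0) * (B * B.transpose) *
          NormedSpace.exp (s • A0.transpose)) :
    COCG A B C t = (Matrix.of fun _ _ => (1:ℝ) : Matrix (Fin N) (Fin N) ℝ) ⊗ₖ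
        (C * W * C.transpose) ∧
    (COCG A B C t).rank = (C * W * C.transpose).rank ∧
    (COCG A B C t).rank ≤ p ∧
    ∀ μ : ℝ, μ ≠ 0 →
      (Module.End.HasEigenvalue (Matrix.toLin' (COCG A B C t)) μ ↔
        Module.End.HasEigenvalue (Matrix.toLin' (C * W * C.transpose)) (μ / N)) :=
  stmt14_general hN A0 A hA B C t W hWdef
end

section
/- For the unidirectional chain as above with input at node 0 (B = e_0) and output at node d (C = e_dᵀ), the scalar output controllability Gramian at time t satisfies C W(t) Cᵀ = s^{2d} ∫₀ᵗ τ^{2d} e^{−2pτ}/(d!)² dτ, which for t → ∞ equals s^{2d}·(2d)!/((d!)²·(2p)^{2d+1}). -/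
/-!
Write the chain matrix as `A = -p • 1 + N` with `N` the nilpotent lower shift of weight `s`.
The scalar part is central, so `exp (τ • A) = e^{-pτ} • exp (τ • N)`, and the exponential series
of `τ • N` terminates; its entry `(d, 0)` is `(τ s)^d / d!`. Squaring gives the integrand
`s^{2d} τ^{2d} e^{-2pτ} / (d!)²`, and the infinite-horizon value is a Gamma integral.
-/

open Matrix MeasureTheory intervalIntegral Nat

theorem NormedSpace.exp_eq_sum_range_of_pow_eq_zero (𝕂 : Type*) {𝔸 : Type*} [Field 𝕂] [CharZero 𝕂]
    [Ring 𝔸] [Algebra 𝕂 𝔸] [TopologicalSpace 𝔸] [IsTopologicalRing 𝔸] {x : 𝔸} {k : ℕ}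
    (hx : x ^ k = 0) : exp x = ∑ m ∈ Finset.range k, (m !⁻¹ : 𝕂) • x ^ m := by
  rw [exp_eq_tsum 𝕂]
  refine tsum_eq_sum fun m hm => ?_
  rw [pow_eq_zero_of_le (by simpa using hm) hx, smul_zero]

theorem Matrix.exp_smul_one_add {m : Type*} [Fintype m] [DecidableEq m] (c : ℝ)
    (M : Matrix m m ℝ) : NormedSpace.exp (c • 1 + M) = Real.exp c • NormedSpace.exp M := by
  have hscalar : NormedSpace.exp (c • 1 : Matrix m m ℝ) = Real.exp c • 1 := by
    rw [smul_one_eq_diagonal, exp_diagonal, smul_one_eq_diagonal, Pi.exp_def, Real.exp_eq_exp_ℝ]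
  rw [exp_add_of_commute _ _ ((Commute.one_left M).smul_left c), hscalar, smul_one_mul]

namespace Matrix

def subdiagShift {R : Type*} [Zero R] (s : R) (n : ℕ) : Matrix (Fin n) (Fin n) R :=
  of fun j k => if (j : ℕ) = k + 1 then s else 0

variable {R : Type*} [Semiring R] {n : ℕ}

theorem subdiagShift_pow_apply (s : R) (m : ℕ) (j k : Fin n) :
    (subdiagShift s n ^ m) j k = if (j : ℕ) = k + m then s ^ m else 0 := by
  induction m generalizing j with
  | zero => simp [one_apply, Fin.ext_iff]
  | succ m ih =>
    have hterm : ∀ l : Fin n, subdiagShift s n j l * (subdiagShift s n ^ m) l k =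
        if (l : ℕ) = k + m ∧ (j : ℕ) = k + (m + 1) then s ^ (m + 1) else 0 := by
      intro l
      rw [ih, subdiagShift, of_apply, ite_zero_mul_ite_zero, ← _root_.pow_succ']
      exact if_congr (by omega) rfl rfl
    rw [_root_.pow_succ', mul_apply, Finset.sum_congr rfl fun l _ => hterm l]
    by_cases hj : (j : ℕ) = k + (m + 1)
    · rw [Finset.sum_eq_single ⟨k + m, by omega⟩ (fun l _ hl => if_neg fun h => hl (Fin.ext h.1))
        (by simp)]
      simp [hj]
    · simp [hj]

theorem subdiagShift_pow_eq_zero (s : R) {m : ℕ} (hm : n ≤ m) : subdiagShift s n ^ m = 0 := by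
  ext j k
  rw [subdiagShift_pow_apply, if_neg (by omega), zero_apply]

theorem smul_subdiagShift (c s : R) : c • subdiagShift s n = subdiagShift (c * s) n := by
  ext j k
  simp [subdiagShift]

theorem exp_subdiagShift_apply {𝕂 : Type*} [Field 𝕂] [CharZero 𝕂] [TopologicalSpace 𝕂]
    [IsTopologicalRing 𝕂] (s : 𝕂) {j k : Fin n} (hkj : (k : ℕ) ≤ j) :
    NormedSpace.exp (subdiagShift s n) j k = s ^ ((j : ℕ) - k) / ((j : ℕ) - k)! := by
  rw [NormedSpace.exp_eq_sum_range_of_pow_eq_zero 𝕂 (subdiagShift_pow_eq_zero s le_rfl),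
    sum_apply]
  simp only [smul_apply, subdiagShift_pow_apply, smul_eq_mul, mul_ite, mul_zero]
  rw [Finset.sum_eq_single ((j : ℕ) - k)]
  · rw [if_pos (by omega), inv_mul_eq_div]
  · exact fun m _ hm => if_neg (by omega)
  · exact fun h => absurd (Finset.mem_range.2 (by omega)) h

end Matrix

theorem Real.integral_pow_mul_exp_neg_mul_Ioi (m : ℕ) {r : ℝ} (hr : 0 < r) :
    ∫ τ in Set.Ioi (0 : ℝ), τ ^ m * Real.exp (-(r * τ)) = m ! / r ^ (m + 1) := by
  have h := Real.integral_rpow_mul_exp_neg_mul_Ioi (a := m + 1) (by positivity) hr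
  rw [add_sub_cancel_right, Real.Gamma_nat_eq_factorial] at h
  simp_rw [Real.rpow_natCast] at h
  rw [h, ← Nat.cast_succ, Real.rpow_natCast, _root_.one_div_pow, one_div_mul_eq_div]

theorem exp_smul_apply_of_chain {n : ℕ} {p s : ℝ} {A : Matrix (Fin n) (Fin n) ℝ}
    (hA : ∀ j k : Fin n, A j k =
      if j = k then -p else if (j : ℕ) = (k : ℕ) + 1 then s else 0)
    (τ : ℝ) {j k : Fin n} (hkj : (k : ℕ) ≤ j) :
    NormedSpace.exp (τ • A) j k =
      Real.exp (-(p * τ)) * ((τ * s) ^ ((j : ℕ) - k) / ((j : ℕ) - k)!) := by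
  have hA' : A = (-p) • 1 + subdiagShift s n := by
    ext j k
    rw [hA]
    by_cases h : j = k
    · simp [h, subdiagShift]
    · simp [h, subdiagShift, one_apply_ne h]
  rw [hA', smul_add, smul_smul, exp_smul_one_add, smul_subdiagShift, Matrix.smul_apply,
    exp_subdiagShift_apply _ hkj, smul_eq_mul, mul_neg, mul_comm τ p]

theorem stmt17_general {n : ℕ} (hn : 0 < n) (p s : ℝ) (hp : 0 < p)
    (A : Matrix (Fin n) (Fin n) ℝ)
    (hA : ∀ j k : Fin n, A j k =
      if j = k then -p else if (j : ℕ) = (k : ℕ) + 1 then s else 0)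
    (d : Fin n) :
    (∀ t : ℝ, 0 ≤ t →
      ∫ τ in (0:ℝ)..t, (NormedSpace.exp (τ • A) d (⟨0, hn⟩ : Fin n)) ^ 2 =
        s ^ (2 * (d : ℕ)) *
          ∫ τ in (0:ℝ)..t, τ ^ (2 * (d : ℕ)) * Real.exp (-2 * p * τ) /
            (((d : ℕ).factorial : ℝ)) ^ 2) ∧
    (∫ τ in Set.Ioi (0:ℝ), (NormedSpace.exp (τ • A) d (⟨0, hn⟩ : Fin n)) ^ 2) =
      s ^ (2 * (d : ℕ)) * ((2 * (d : ℕ)).factorial : ℝ) /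
        ((((d : ℕ).factorial : ℝ)) ^ 2 * (2 * p) ^ (2 * (d : ℕ) + 1)) := by
  have hsq : ∀ τ : ℝ, (NormedSpace.exp (τ • A) d (⟨0, hn⟩ : Fin n)) ^ 2 =
      s ^ (2 * (d : ℕ)) * (τ ^ (2 * (d : ℕ)) * Real.exp (-2 * p * τ) / ((d : ℕ)! : ℝ) ^ 2) := by
    intro τ
    have hexp : Real.exp (-(p * τ)) ^ 2 = Real.exp (-2 * p * τ) := by
      rw [sq, ← Real.exp_add]
      ring_nf
    rw [exp_smul_apply_of_chain hA τ (Nat.zero_le _), Nat.sub_zero, mul_pow, hexp]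
    ring
  refine ⟨fun t _ => by simp_rw [hsq]; exact intervalIntegral.integral_const_mul _ _, ?_⟩
  simp_rw [hsq, neg_mul]
  rw [MeasureTheory.integral_const_mul, MeasureTheory.integral_div,
    Real.integral_pow_mul_exp_neg_mul_Ioi _ (by positivity)]
  ring

theorem stmt17 {n : ℕ} (hn : 0 < n) (p s : ℝ) (hp : 0 < p) (hs : 0 < s)
    (A : Matrix (Fin n) (Fin n) ℝ)
    (hA : ∀ j k : Fin n, A j k =
      if j = k then -p else if (j : ℕ) = (k : ℕ) + 1 then s else 0)
    (d : Fin n) :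
    (∀ t : ℝ, 0 ≤ t →
      ∫ τ in (0:ℝ)..t, (NormedSpace.exp (τ • A) d (⟨0, hn⟩ : Fin n)) ^ 2 =
        s ^ (2 * (d : ℕ)) *
          ∫ τ in (0:ℝ)..t, τ ^ (2 * (d : ℕ)) * Real.exp (-2 * p * τ) /
            (((d : ℕ).factorial : ℝ)) ^ 2) ∧
    (∫ τ in Set.Ioi (0:ℝ), (NormedSpace.exp (τ • A) d (⟨0, hn⟩ : Fin n)) ^ 2) =
      s ^ (2 * (d : ℕ)) * ((2 * (d : ℕ)).factorial : ℝ) /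
        ((((d : ℕ).factorial : ℝ)) ^ 2 * (2 * p) ^ (2 * (d : ℕ) + 1)) :=
  stmt17_general hn p s hp A hA d
end
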